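/- arXiv:1905.10352 — 2 statements merged into one kernel-verified Lean document; each statement's English description precedes it below -/
import Mathlib

section
/- For every integer n ≥ 1, the sum of all genus one ψ-intersection numbers ∫_{M̄_{1,n}} 1/∏_{i=1}^n (1−ψ_i) equals (1/24)·( n^n − ∑_{k=1}^{n−1} n^{n−k}·(n−1)!/( k(k+1)·(n−k−1)! ) ). -/
/-! Summed over `|a| = n`, the leading multinomials give `n^n` by the multinomial theorem. In the
correction term exchange the two sums: for fixed `b`, the shift `a ↦ a - 𝟙_b` identifies the
admissible `a` with all tuples of sum `n - |b|`, so the inner sum is `n^(n-|b|)`. Grouping the `b`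
by size `k = j + 1` leaves `∑ C(n, j+1) n^(n-j-1) (j-1)!`, and each summand equals the one in the
closed formula because `C(n, j+1) (j+1)! (n-j-1)! = n!`. -/

open Finset

/-- The closed formula for genus one `ψ`-class intersection numbers:
`(1/24)·( multinomial(n; a) − ∑_{b ∈ {0,1}^n} multinomial(n − |b|; a − b)·(|b| − 2)! )`,
where summands involving negative factorials or negative multinomial arguments
(i.e. `|b| ≤ 1`, or `bᵢ = 1` with `aᵢ = 0`) are excluded. -/
def genusOnePsiClosedForm (n : ℕ) (a : Fin n → ℕ) : ℚ :=
  (1 / 24 : ℚ) *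
    ((Nat.multinomial Finset.univ a : ℚ) -
      ∑ b ∈ (Finset.univ : Finset (Fin n)).powerset.filter
          (fun b : Finset (Fin n) => 2 ≤ b.card ∧ ∀ i ∈ b, 1 ≤ a i),
        (Nat.multinomial Finset.univ (fun i => a i - if i ∈ b then 1 else 0) : ℚ) *
          (Nat.factorial (b.card - 2) : ℚ))

open scoped Nat

theorem Nat.sum_multinomial_antidiagonalTuple (k m : ℕ) :
    ∑ a ∈ Nat.antidiagonalTuple k m, Nat.multinomial univ a = k ^ m := by
  simpa [piAntidiag_univ_fin_eq_antidiagonalTuple] using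
    (sum_pow_eq_sum_piAntidiag (univ : Finset (Fin k)) (fun _ ↦ (1 : ℕ)) m).symm

theorem Nat.sum_multinomial_sub_indicator {k m : ℕ} (b : Finset (Fin k)) (hb : #b ≤ m) :
    ∑ a ∈ (Nat.antidiagonalTuple k m).filter (fun a ↦ ∀ i ∈ b, 1 ≤ a i),
      Nat.multinomial univ (fun i ↦ a i - if i ∈ b then 1 else 0) = k ^ (m - #b) := by
  have hcard : ∑ i, (if i ∈ b then 1 else 0) = #b := by simp
  rw [← Nat.sum_multinomial_antidiagonalTuple k (m - #b)]
  refine sum_nbij' (fun a i ↦ a i - if i ∈ b then 1 else 0)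
    (fun a i ↦ a i + if i ∈ b then 1 else 0) ?_ ?_ ?_ ?_ fun _ _ ↦ rfl
  · intro a ha
    simp only [mem_filter, Nat.mem_antidiagonalTuple] at ha ⊢
    have hle : ∀ i ∈ univ, (if i ∈ b then 1 else 0) ≤ a i := by
      intro i _; split_ifs with hi
      exacts [ha.2 i hi, Nat.zero_le _]
    rw [sum_tsub_distrib _ hle, ha.1, hcard]
  · intro a ha
    simp only [mem_filter, Nat.mem_antidiagonalTuple] at ha ⊢
    refine ⟨by rw [sum_add_distrib, ha, hcard]; omega, fun i hi ↦ by simp [hi]⟩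
  · intro a ha
    simp only [mem_filter] at ha
    funext i
    by_cases hi : i ∈ b
    · simp only [if_pos hi]; have := ha.2 i hi; omega
    · simp [hi]
  · intro a _
    funext i
    by_cases hi : i ∈ b <;> simp [hi]

theorem Finset.sum_range_succ_ite_two_le_eq_sum_Icc {M : Type*} [AddCommMonoid M] (n : ℕ) (f : ℕ → M) :
    ∑ k ∈ range (n + 1), (if 2 ≤ k then f k else 0) = ∑ j ∈ Icc 1 (n - 1), f (j + 1) := by
  rw [← sum_filter]
  refine (sum_nbij' (· + 1) (· - 1) ?_ ?_ ?_ ?_ fun _ _ ↦ rfl).symm <;>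
    intro j hj <;> simp only [mem_Icc, mem_filter, mem_range] at hj ⊢ <;> omega

theorem Nat.sum_sum_multinomial_sub_indicator_mul_factorial (n : ℕ) :
    ∑ a ∈ Nat.antidiagonalTuple n n,
      ∑ b ∈ univ.powerset.filter (fun b : Finset (Fin n) ↦ 2 ≤ #b ∧ ∀ i ∈ b, 1 ≤ a i),
        Nat.multinomial univ (fun i ↦ a i - if i ∈ b then 1 else 0) * (#b - 2)! =
      ∑ j ∈ Icc 1 (n - 1), n.choose (j + 1) * (n ^ (n - (j + 1)) * (j - 1)!) := by
  rw [sum_comm' (t' := univ.powerset.filter (fun b : Finset (Fin n) ↦ 2 ≤ #b))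
    (s' := fun b ↦ (Nat.antidiagonalTuple n n).filter (fun a ↦ ∀ i ∈ b, 1 ≤ a i))
    (by intro a b; simp only [mem_filter]; tauto)]
  simp_rw [← sum_mul]
  rw [sum_congr rfl fun b _ ↦ by
    rw [Nat.sum_multinomial_sub_indicator b (by simpa using card_le_univ b)]]
  rw [sum_filter, sum_powerset_apply_card (fun k ↦ if 2 ≤ k then n ^ (n - k) * (k - 2)! else 0)]
  simp [mul_ite, sum_range_succ_ite_two_le_eq_sum_Icc]

theorem Nat.cast_choose_mul_pow_mul_factorial {j n : ℕ} (hj : 1 ≤ j) (hjn : j ≤ n - 1) :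
    ((n.choose (j + 1) * (n ^ (n - (j + 1)) * (j - 1)!) : ℕ) : ℚ) =
      n ^ (n - j) * (n - 1)! / (j * (j + 1) * (n - j - 1)!) := by
  obtain ⟨i, rfl⟩ : ∃ i, j = i + 1 := ⟨j - 1, by omega⟩
  obtain ⟨r, rfl⟩ : ∃ r, n = i + r + 2 := ⟨n - i - 2, by omega⟩
  have hchoose := Nat.choose_mul_factorial_mul_factorial (n := i + r + 2) (k := i + 2) (by omega)
  rw [show i + r + 2 - (i + 2) = r by omega, show (i + 2)! = (i + 2) * (i + 1) * (i)! by
      simp only [Nat.factorial_succ, mul_assoc],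
    show (i + r + 2)! = (i + r + 2) * (i + r + 1)! from Nat.factorial_succ _] at hchoose
  simp only [show i + 1 + 1 = i + 2 by omega, show i + r + 2 - (i + 2) = r by omega,
    show i + 1 - 1 = i by omega, show i + r + 2 - (i + 1) = r + 1 by omega,
    show i + r + 2 - 1 = i + r + 1 by omega]
  rw [eq_div_iff (by positivity)]
  have := congrArg (Nat.cast : ℕ → ℚ) hchoose
  push_cast at this ⊢
  linear_combination ((i : ℚ) + r + 2) ^ r * this

theorem genusOne_psi_intersections_total_general (n : ℕ) :
    ∑ a ∈ Finset.Nat.antidiagonalTuple n n, genusOnePsiClosedForm n a =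
      (1 / 24 : ℚ) * ((n : ℚ) ^ n -
        ∑ k ∈ Finset.Icc 1 (n - 1), (n : ℚ) ^ (n - k) * (Nat.factorial (n - 1) : ℚ) /
          (((k : ℚ) * ((k : ℚ) + 1)) * (Nat.factorial (n - k - 1) : ℚ))) := by
  simp only [genusOnePsiClosedForm, ← mul_sum, sum_sub_distrib]
  congr 2
  · exact_mod_cast Nat.sum_multinomial_antidiagonalTuple n n
  · rw [← sum_congr rfl fun j hj ↦
      Nat.cast_choose_mul_pow_mul_factorial (mem_Icc.1 hj).1 (mem_Icc.1 hj).2]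
    exact_mod_cast Nat.sum_sum_multinomial_sub_indicator_mul_factorial n

/-- The sum of all genus one `ψ`-intersection numbers
`∫_{M̄_{1,n}} 1/∏(1−ψᵢ) = ∑_{|a|=n} ∫ ψ^a` equals
`(1/24)·( n^n − ∑_{k=1}^{n−1} n^{n−k}·(n−1)!/( k(k+1)·(n−k−1)! ) )`,
where each summand `∫ ψ^a` is given by the closed multinomial formula. -/
theorem genusOne_psi_intersections_total (n : ℕ) (hn : 1 ≤ n) :
    ∑ a ∈ Finset.Nat.antidiagonalTuple n n, genusOnePsiClosedForm n a =
      (1 / 24 : ℚ) * ((n : ℚ) ^ n -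
        ∑ k ∈ Finset.Icc 1 (n - 1), (n : ℚ) ^ (n - k) * (Nat.factorial (n - 1) : ℚ) /
          (((k : ℚ) * ((k : ℚ) + 1)) * (Nat.factorial (n - k - 1) : ℚ))) :=
  genusOne_psi_intersections_total_general n
end

section
/- The Masur–Veech polynomial V Ω^{MV}_{0,4}(L₁,L₂,L₃,L₄) = (1/2)(π² + L₁² + L₂² + L₃² + L₄²); in particular MV_{0,4} = 2π², where MV_{0,4} = (2^{4·0−2+4}·(4·0−4+4)!/(6·0−7+2·4)!)·V Ω^{MV}_{0,4}(0,0,0,0). -/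
/-!
Since `VΩ^K_{0,3} = 1`, each of the three one-edge graphs contributes
`∫₀^∞ ℓ dℓ/(e^ℓ-1)`. Expanding `1/(e^ℓ-1) = ∑ₙ e^{-(n+1)ℓ}` and integrating termwise gives the
Bose integral `∫₀^∞ ℓ^{s-1} dℓ/(e^ℓ-1) = Γ(s) ζ(s)`, which at `s = 2` is `π²/6`; the three
graphs together add `π²/2` to `VΩ^K_{0,4}(L)`.
-/

open MeasureTheory Real

noncomputable section

/-- The Kontsevich volume `VΩ^K_{0,3} = 1`. -/
def VOmegaK03 (_ _ _ : ℝ) : ℝ := 1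

/-- The Kontsevich volume `VΩ^K_{0,4}(ℓ₁,…,ℓ₄) = (1/2)(ℓ₁²+ℓ₂²+ℓ₃²+ℓ₄²)`. -/
def VOmegaK04 (l1 l2 l3 l4 : ℝ) : ℝ := (1 / 2) * (l1 ^ 2 + l2 ^ 2 + l3 ^ 2 + l4 ^ 2)

/-- The Masur–Veech polynomial `VΩ^{MV}_{0,4}`: the sum over the stable graphs of type
`(0,4)` — the one-vertex graph, contributing `VΩ^K_{0,4}(L)`, and the three one-edge
graphs with two trivalent genus-zero vertices (leaves split `2+2`), each contributing
`∫₀^∞ VΩ^K_{0,3}(ℓ,L_a,L_b)·VΩ^K_{0,3}(ℓ,L_c,L_d)·ℓ dℓ/(e^ℓ−1)` (trivial automorphisms). -/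
def VOmegaMV04 (L : Fin 4 → ℝ) : ℝ :=
  VOmegaK04 (L 0) (L 1) (L 2) (L 3) +
    (∫ ℓ in Set.Ioi (0 : ℝ),
      VOmegaK03 ℓ (L 0) (L 1) * VOmegaK03 ℓ (L 2) (L 3) * (ℓ / (Real.exp ℓ - 1))) +
    (∫ ℓ in Set.Ioi (0 : ℝ),
      VOmegaK03 ℓ (L 0) (L 2) * VOmegaK03 ℓ (L 1) (L 3) * (ℓ / (Real.exp ℓ - 1))) +
    (∫ ℓ in Set.Ioi (0 : ℝ),
      VOmegaK03 ℓ (L 0) (L 3) * VOmegaK03 ℓ (L 1) (L 2) * (ℓ / (Real.exp ℓ - 1)))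

lemma hasSum_exp_neg_succ_mul {t : ℝ} (ht : 0 < t) :
    HasSum (fun n : ℕ => exp (-((n + 1) * t))) (1 / (exp t - 1)) := by
  have hq : exp (-t) < 1 := exp_lt_one_iff.mpr (neg_lt_zero.mpr ht)
  have h := (hasSum_geometric_of_lt_one (exp_pos (-t)).le hq).mul_left (exp (-t))
  have hterm (n : ℕ) : exp (-t) * exp (-t) ^ n = exp (-((n + 1) * t)) := by
    rw [← exp_nat_mul, ← exp_add]
    ring_nf
  have hsum : exp (-t) * (1 - exp (-t))⁻¹ = 1 / (exp t - 1) := by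
    have : exp t - 1 ≠ 0 := (sub_pos.mpr (one_lt_exp_iff.mpr ht)).ne'
    rw [exp_neg]
    field_simp
  simpa only [hterm, hsum] using h

theorem hasSum_integral_rpow_div_exp_sub_one {s : ℝ} (hs : 1 < s) :
    HasSum (fun n : ℕ => Gamma s / ((n : ℝ) + 1) ^ s)
      (∫ t in Set.Ioi 0, t ^ (s - 1) / (exp t - 1)) := by
  have hs₀ : 0 < s := by linarith
  set F : ℕ → ℝ → ℝ := fun n t => t ^ (s - 1) * exp (-((n + 1) * t))
  have hF_integral (n : ℕ) : ∫ t in Set.Ioi 0, F n t = Gamma s / ((n : ℝ) + 1) ^ s := by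
    rw [integral_rpow_mul_exp_neg_mul_Ioi hs₀ (by positivity), div_rpow zero_le_one
      (by positivity), one_rpow]
    ring
  have hF_int (n : ℕ) : IntegrableOn (F n) (Set.Ioi 0) :=
    .of_integral_ne_zero <| by
      rw [hF_integral]
      exact (div_pos (Gamma_pos_of_pos hs₀) (by positivity)).ne'
  have hF_norm (n : ℕ) : ∫ t in Set.Ioi 0, ‖F n t‖ = Gamma s / ((n : ℝ) + 1) ^ s := by
    rw [← hF_integral]
    refine setIntegral_congr_fun measurableSet_Ioi fun t ht => norm_of_nonneg ?_
    exact mul_nonneg (rpow_nonneg (le_of_lt ht) _) (exp_pos _).le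
  have h_summable : Summable fun n : ℕ => Gamma s / ((n : ℝ) + 1) ^ s := by
    have := (summable_nat_add_iff 1).mpr (summable_one_div_nat_rpow.mpr hs)
    simpa only [Nat.cast_add, Nat.cast_one, mul_one_div] using this.mul_left (Gamma s)
  have h := hasSum_integral_of_summable_integral_norm hF_int
    (by simpa only [hF_norm] using h_summable)
  simp only [hF_integral] at h
  have h_integrand : ∫ t in Set.Ioi 0, t ^ (s - 1) / (exp t - 1) =
      ∫ t in Set.Ioi 0, ∑' n, F n t :=
    setIntegral_congr_fun measurableSet_Ioi fun t ht => by
      rw [div_eq_mul_one_div, ((hasSum_exp_neg_succ_mul ht).mul_left _).tsum_eq]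
  rwa [h_integrand]

theorem integral_div_exp_sub_one : ∫ t in Set.Ioi 0, t / (exp t - 1) = π ^ 2 / 6 := by
  have h := hasSum_integral_rpow_div_exp_sub_one one_lt_two
  norm_num only [Gamma_two, rpow_one, rpow_two] at h
  refine h.unique ?_
  simpa using (hasSum_nat_add_iff' 1).mpr hasSum_zeta_two

/-- `VΩ^{MV}_{0,4}(L₁,…,L₄) = (1/2)(π² + L₁² + L₂² + L₃² + L₄²)`; in particular
`MV_{0,4} = (2^{4·0−2+4}·(4·0−4+4)!/(6·0−7+2·4)!)·VΩ^{MV}_{0,4}(0,0,0,0) = 2π²`. -/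
theorem VOmegaMV04_eq :
    (∀ L : Fin 4 → ℝ, VOmegaMV04 L = (1 / 2) * (π ^ 2 + ∑ i, (L i) ^ 2)) ∧
      (2 : ℝ) ^ (((4 : ℤ) * 0 - 2 + 4).toNat) *
          (Nat.factorial (((4 : ℤ) * 0 - 4 + 4).toNat) : ℝ) /
          (Nat.factorial (((6 : ℤ) * 0 - 7 + 2 * 4).toNat) : ℝ) *
          VOmegaMV04 (fun _ => 0) = 2 * π ^ 2 := by
  have hV (L : Fin 4 → ℝ) : VOmegaMV04 L = (1 / 2) * (π ^ 2 + ∑ i, (L i) ^ 2) := by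
    simp only [VOmegaMV04, VOmegaK04, VOmegaK03, one_mul, integral_div_exp_sub_one,
      Fin.sum_univ_four]
    ring
  refine ⟨hV, ?_⟩
  norm_num [hV, Int.toNat]
  ring

end
end
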